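/- arXiv:0901.0794 — 2 statements merged into one kernel-verified Lean document; each statement's English description precedes it below -/
import Mathlib

section
/- For real λ, naturals m, j, k, n with the Pochhammer symbol (x)_r = x(x+1)···(x+r-1), the following recursion holds: C(n,k)·(j+1)_k·(2λ-m+2j+k)_{n-k}·(2λ-m+2j+k+n) + C(n,k-1)·(j+1)_k·(2λ-m+2j+k-1)_{n-k+1} = C(n+1,k)·(j+1)_k·(2λ-m+2j+k)_{n+1-k}, where C(n,k) denotes the binomial coefficient (equal to 0 if k > n or k < 0). -/
open Polynomial

/- Writing `x = 2λ - m + 2j + k`, the common factor `(j+1)_k` splits off, and after peeling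
`(x)_{n-k}` off both Pochhammer factors of length `n + 1 - k` what remains is Pascal's rule
together with the absorption identity `C(n, k) · k = C(n, k - 1) · (n - k + 1)`. -/

theorem ascPochhammer_succ_eval_left {S : Type*} [CommSemiring S] (n : ℕ) (x : S) :
    (ascPochhammer S (n + 1)).eval x = x * (ascPochhammer S n).eval (x + 1) := by
  rw [ascPochhammer_succ_left, eval_mul, eval_X, eval_comp, eval_add, eval_X, eval_one]

theorem choose_succ_mul_ascPochhammer_eval_add {R : Type*} [CommRing R] (x : R) (n k : ℕ) :
    (n.choose (k + 1) : R) * (ascPochhammer R (n - (k + 1))).eval x * (x + n)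
      + n.choose k * (ascPochhammer R (n - k)).eval (x - 1)
    = (n + 1).choose (k + 1) * (ascPochhammer R (n - k)).eval x := by
  rcases Nat.lt_or_ge k n with hkn | hnk
  · obtain ⟨r, rfl⟩ : ∃ r, n = k + 1 + r := ⟨n - (k + 1), by omega⟩
    have hsub : k + 1 + r - k = r + 1 := by omega
    have absorb : ((k + 1 + r).choose (k + 1) : R) * (k + 1)
        = (k + 1 + r).choose k * (r + 1) := by
      have h := Nat.choose_succ_right_eq (k + 1 + r) k
      rw [hsub] at h
      simpa using congrArg (Nat.cast : ℕ → R) h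
    rw [Nat.add_sub_cancel_left, hsub, ascPochhammer_succ_eval_left r (x - 1), sub_add_cancel,
      ascPochhammer_succ_eval, Nat.choose_succ_succ, Nat.cast_add]
    push_cast
    linear_combination (ascPochhammer R r).eval x * absorb
  · simp [Nat.choose_succ_succ, Nat.choose_eq_zero_of_lt (Nat.lt_succ_of_le hnk),
      Nat.sub_eq_zero_of_le hnk, Nat.sub_eq_zero_of_le (Nat.le_succ_of_le hnk)]

/-- The coefficient recursion
`C(n,k)(j+1)_k(2λ-m+2j+k)_{n-k}(2λ-m+2j+k+n) + C(n,k-1)(j+1)_k(2λ-m+2j+k-1)_{n-k+1}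
  = C(n+1,k)(j+1)_k(2λ-m+2j+k)_{n+1-k}`,
with `C(n,k) = 0` for `k > n` or `k < 0` (the `k = 0` second term is `0`). -/
theorem pochhammer_binomial_recursion (lam : ℝ) (m j k n : ℕ) :
    (n.choose k : ℝ) * Polynomial.eval ((j : ℝ) + 1) (ascPochhammer ℝ k)
        * Polynomial.eval (2 * lam - m + 2 * j + k) (ascPochhammer ℝ (n - k))
        * (2 * lam - m + 2 * j + k + n)
      + (if k = 0 then 0 else (n.choose (k - 1) : ℝ))
          * Polynomial.eval ((j : ℝ) + 1) (ascPochhammer ℝ k)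
          * Polynomial.eval (2 * lam - m + 2 * j + k - 1) (ascPochhammer ℝ (n + 1 - k))
    = ((n + 1).choose k : ℝ) * Polynomial.eval ((j : ℝ) + 1) (ascPochhammer ℝ k)
        * Polynomial.eval (2 * lam - m + 2 * j + k) (ascPochhammer ℝ (n + 1 - k)) := by
  cases k with
  | zero =>
    simp only [if_pos, Nat.choose_zero_right, Nat.sub_zero, ascPochhammer_succ_eval]
    push_cast
    ring
  | succ k =>
    rw [if_neg k.succ_ne_zero, Nat.add_sub_cancel, Nat.add_sub_add_right]
    linear_combination (ascPochhammer ℝ (k + 1)).eval ((j : ℝ) + 1)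
      * choose_succ_mul_ascPochhammer_eval_add (2 * lam - m + 2 * j + (k + 1 : ℕ)) n k
end

section
/- Let λ be real and m a natural number. Then the following are equivalent: (i) 2λ > m; (ii) for all integers j with 0 ≤ j ≤ m and all n ≥ 1, the quantity (2λ - m + 2j)_n · n! is strictly positive, where (x)_n = x(x+1)···(x+n-1). -/
/-- For real `λ` and natural `m`, the following are equivalent:
(i) `2λ > m`; (ii) for all `0 ≤ j ≤ m` and `n ≥ 1`,
`(2λ - m + 2j)_n · n! > 0`. -/
theorem positivity_iff_two_lambda_gt_m (lam : ℝ) (m : ℕ) :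
    (2 * lam > m) ↔
      (∀ j : ℕ, j ≤ m → ∀ n : ℕ, 1 ≤ n →
        0 < Polynomial.eval (2 * lam - m + 2 * j) (ascPochhammer ℝ n) * n.factorial) := by
  constructor
  · intro h j _ n _
    have hx : 0 < 2 * lam - m + 2 * j := by
      have : (0 : ℝ) ≤ j := j.cast_nonneg
      linarith
    exact mul_pos (ascPochhammer_pos n _ hx) (mod_cast n.factorial_pos)
  · intro h
    have hx : 0 < 2 * lam - m := by
      simpa [ascPochhammer_one] using h 0 m.zero_le 1 le_rfl
    linarith
end
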